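/- arXiv:2603.28614 — 3 statements merged into one kernel-verified Lean document; each statement's English description precedes it below -/
import Mathlib

section
/- Let G be a directed graph rooted in r, let A be an arborescence of G rooted in r, and let uv be an arc of G that does not belong to A. Then the set of arcs obtained from A by removing the unique arc of A entering v and adding the arc uv is again an arborescence of G rooted in r if and only if u is not a descendant of v in A, i.e., if and only if the unique path in A from r to u does not pass through v. -/
/-- An arborescence of the digraph `G` rooted in `r`: a finite set of arcs of `G` such that
no arc enters `r`, every vertex other than `r` has exactly one entering arc, and every
vertex is reachable from `r` along the arcs (so it is a spanning directed tree oriented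
away from `r`). -/
structure Arborescence {V : Type*} (G : V → V → Prop) (r : V) where
  arcs : Finset (V × V)
  sub : ∀ a ∈ arcs, G a.1 a.2
  noRoot : ∀ a ∈ arcs, a.2 ≠ r
  uniqueIn : ∀ v, v ≠ r → ∃! a, a ∈ arcs ∧ a.2 = v
  reach : ∀ v, Relation.ReflTransGen (fun x y => (x, y) ∈ arcs) r v

theorem Arborescence.ext' {V : Type*} {G : V → V → Prop} {r : V}
    {A B : Arborescence G r} (h : A.arcs = B.arcs) : A = B := by
  cases A; cases B; cases h; rfl

instance {V : Type*} [DecidableEq V] (G : V → V → Prop) (r : V) :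
    DecidableEq (Arborescence G r) := fun A B =>
  decidable_of_iff (A.arcs = B.arcs) ⟨Arborescence.ext', fun h => h ▸ rfl⟩

/-- The flip graph of `G` rooted in `r`: two arborescences are adjacent when their
arc sets differ in exactly one arc. -/
def FlipGraph {V : Type*} [DecidableEq V] (G : V → V → Prop) (r : V) :
    SimpleGraph (Arborescence G r) where
  Adj A B := A ≠ B ∧ (A.arcs \ B.arcs).card = 1 ∧ (B.arcs \ A.arcs).card = 1
  symm := ⟨fun A B ⟨h1, h2, h3⟩ => ⟨h1.symm, h3, h2⟩⟩
  loopless := ⟨fun A h => h.1 rfl⟩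

/-- `u` is a descendant of `v` in the digraph `G` rooted in `r`: every directed path
(given as the list of its vertices) from `r` to `u` in `G` passes through `v`. -/
def IsDescendant {V : Type*} (G : V → V → Prop) (r v u : V) : Prop :=
  ∀ l : List V, l.Chain' G → l.head? = some r → l.getLast? = some u → v ∈ l

private lemma chain_exists_pred {V : Type*} {R : V → V → Prop} :
    ∀ {x : V} {l : List V}, List.Chain R x l → ∀ y ∈ l, ∃ z, R z y := by
  intro x l h
  induction l generalizing x with
  | nil => simp
  | cons b l ih =>
    change List.IsChain R (x :: b :: l) at h
    rw [List.isChain_cons_cons] at h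
    intro y hy
    rcases List.mem_cons.mp hy with rfl | hy
    · exact ⟨_, h.1⟩
    · exact ih h.2 y hy

private lemma chain_strengthen {V : Type*} {R S : V → V → Prop} {v : V}
    (h : ∀ x y, R x y → y ≠ v → S x y) :
    ∀ {x : V} {l : List V}, List.Chain R x l → (∀ y ∈ l, y ≠ v) → List.Chain S x l := by
  intro x l hc
  induction l generalizing x with
  | nil => intro _; exact List.isChain_singleton _
  | cons b l ih =>
    change List.IsChain R (x :: b :: l) at hc
    rw [List.isChain_cons_cons] at hc
    intro hne
    change List.IsChain S (x :: b :: l)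
    exact List.isChain_cons_cons.mpr ⟨h _ _ hc.1 (hne _ List.mem_cons_self),
      ih hc.2 fun y hy => hne y (List.mem_cons_of_mem _ hy)⟩

/-- Let `A` be an arborescence of `G` rooted in `r`, and let `uv` be an
arc of `G` not in `A`, with `v ≠ r`, and let `a` be the unique arc of `A` entering `v`.
Then removing `a` from `A` and adding the arc `uv` yields again an arborescence of `G`
rooted in `r` if and only if `u` is not a descendant of `v` in `A`. -/
theorem flip_in_iff_not_descendant {V : Type*} [Fintype V] [DecidableEq V]
    (G : V → V → Prop) (r : V) (A : Arborescence G r) (u v : V)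
    (huv : G u v) (hnotin : (u, v) ∉ A.arcs) (hvr : v ≠ r)
    (a : V × V) (ha : a ∈ A.arcs) (hav : a.2 = v) :
    (∃ B : Arborescence G r, B.arcs = insert (u, v) (A.arcs.erase a)) ↔
      ¬ IsDescendant (fun x y => (x, y) ∈ A.arcs) r v u := by
  classical
  set RA : V → V → Prop := fun x y => (x, y) ∈ A.arcs with hRA
  set R' : V → V → Prop := fun x y => (x, y) ∈ A.arcs.erase a with hR'
  have hL3 : ∀ b ∈ A.arcs.erase a, b.2 ≠ v := by
    intro b hb hb2
    obtain ⟨hba, hbA⟩ := Finset.mem_erase.mp hb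
    exact hba ((A.uniqueIn v hvr).unique ⟨hbA, hb2⟩ ⟨ha, hav⟩)
  have key : Relation.ReflTransGen R' r u →
      ¬ IsDescendant (fun x y => (x, y) ∈ A.arcs) r v u := by
    intro h hdesc
    obtain ⟨l, hchain, hlast⟩ := List.exists_isChain_cons_of_relationReflTransGen h
    have hchainA : List.Chain RA r l :=
      hchain.imp fun x y hxy => Finset.mem_of_mem_erase hxy
    have hv : v ∈ r :: l := by
      refine hdesc (r :: l) hchainA rfl ?_
      rw [List.getLast?_eq_getLast_of_ne_nil (List.cons_ne_nil _ _), hlast]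
    rcases List.mem_cons.mp hv with rfl | hv
    · exact hvr rfl
    · obtain ⟨z, hz⟩ := chain_exists_pred hchain v hv
      exact hL3 (z, v) hz rfl
  constructor
  · rintro ⟨B, hB⟩ hdesc
    have claim : ∀ w, Relation.ReflTransGen (fun x y => (x, y) ∈ B.arcs) r w →
        Relation.ReflTransGen R' r w ∨ Relation.ReflTransGen R' r u := by
      intro w hw
      induction hw with
      | refl => exact Or.inl Relation.ReflTransGen.refl
      | @tail b c _ hbc ih =>
        rw [hB] at hbc
        rcases Finset.mem_insert.mp hbc with heq | hmem
        · rw [Prod.mk.injEq] at heq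
          obtain ⟨rfl, rfl⟩ := heq
          rcases ih with h | h
          · exact Or.inr h
          · exact Or.inr h
        · rcases ih with h | h
          · exact Or.inl (h.tail hmem)
          · exact Or.inr h
    rcases claim u (B.reach u) with h | h
    · exact key h hdesc
    · exact key h hdesc
  · intro hdesc
    simp only [IsDescendant, not_forall] at hdesc
    obtain ⟨l, hchain, hhead, hlast, hvl⟩ := hdesc
    obtain ⟨x, l', rfl⟩ : ∃ x l', l = x :: l' := by
      cases l with
      | nil => simp at hhead
      | cons x l' => exact ⟨x, l', rfl⟩
    simp only [List.head?_cons, Option.some.injEq] at hhead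
    obtain rfl : r = x := hhead.symm
    have hchain' : List.Chain RA r l' := hchain
    have hne : ∀ y ∈ l', y ≠ v := fun y hy hyv =>
      hvl (hyv ▸ List.mem_cons_of_mem _ hy)
    have hchainR' : List.Chain R' r l' := by
      refine chain_strengthen ?_ hchain' hne
      intro x y hxy hyv
      exact Finset.mem_erase.mpr ⟨fun hxa => hyv (by rw [← hav, ← hxa]), hxy⟩
    have hlast' : (r :: l').getLast (List.cons_ne_nil _ _) = u := by
      have := List.getLast?_eq_getLast_of_ne_nil (l := r :: l') (List.cons_ne_nil _ _)
      rw [hlast] at this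
      exact (Option.some.inj this).symm
    have hru : Relation.ReflTransGen R' r u :=
      List.relationReflTransGen_of_exists_isChain_cons l' hchainR' hlast'
    set S : Finset (V × V) := insert (u, v) (A.arcs.erase a) with hS
    have hruS : Relation.ReflTransGen (fun x y => (x, y) ∈ S) r u :=
      (Relation.ReflTransGen.mono (fun x y hxy => Finset.mem_insert_of_mem hxy) :
        Relation.ReflTransGen R' ≤ Relation.ReflTransGen (fun x y => (x, y) ∈ S)) r u hru
    have hrvS : Relation.ReflTransGen (fun x y => (x, y) ∈ S) r v :=
      hruS.tail (Finset.mem_insert_self _ _)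
    refine ⟨⟨S, ?_, ?_, ?_, ?_⟩, rfl⟩
    · intro b hb
      rcases Finset.mem_insert.mp hb with rfl | hb
      · exact huv
      · exact A.sub b (Finset.mem_of_mem_erase hb)
    · intro b hb
      rcases Finset.mem_insert.mp hb with rfl | hb
      · exact hvr
      · exact A.noRoot b (Finset.mem_of_mem_erase hb)
    · intro w hw
      by_cases hwv : w = v
      · subst hwv
        refine ⟨(u, w), ⟨Finset.mem_insert_self _ _, rfl⟩, ?_⟩
        rintro b ⟨hb, hb2⟩
        rcases Finset.mem_insert.mp hb with rfl | hb
        · rfl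
        · exact absurd hb2 (hL3 b hb)
      · obtain ⟨b, ⟨hb, hb2⟩, hbu⟩ := A.uniqueIn w hw
        have hba : b ≠ a := fun h => hwv (by rw [← hb2, h, hav])
        refine ⟨b, ⟨Finset.mem_insert_of_mem (Finset.mem_erase.mpr ⟨hba, hb⟩), hb2⟩, ?_⟩
        rintro c ⟨hc, hc2⟩
        rcases Finset.mem_insert.mp hc with rfl | hc
        · exact absurd hc2.symm hwv
        · exact hbu c ⟨Finset.mem_of_mem_erase hc, hc2⟩
    · intro w
      have hw := A.reach w
      induction hw with
      | refl => exact Relation.ReflTransGen.refl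
      | @tail b c _ hbc ih =>
        by_cases hca : (b, c) = a
        · have : c = v := by rw [← hav, ← hca]
          exact this ▸ hrvS
        · exact ih.tail (Finset.mem_insert_of_mem (Finset.mem_erase.mpr ⟨hca, hbc⟩))
end

section
/- Let G be a directed graph rooted in r and let A be an arborescence of G rooted in r that has degree exactly one in the flip graph of G rooted in r, its unique neighbour being obtained from A by flipping in some arc uv of G. Then G - uv is built on A; that is, for every arc x → y of G - uv that does not belong to A, the vertex x is a descendant of y in A (the unique path in A from r to x passes through y). -/
private lemma chain_rtg {V : Type*} {R : V → V → Prop} :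
    ∀ (l : List V) (a b : V), l.Chain' R → l.head? = some a → l.getLast? = some b →
      Relation.ReflTransGen (fun p q => R p q ∧ q ∈ l) a b
  | [], a, b, _, ha, _ => by simp at ha
  | [c], a, b, _, ha, hb => by
      simp at ha hb
      subst ha; subst hb; exact .refl
  | c :: d :: t, a, b, hch, ha, hb => by
      simp only [List.head?_cons, Option.some.injEq] at ha
      have hac : a = c := ha.symm
      subst hac
      replace hch := List.isChain_cons_cons.mp hch
      have hb' : (d :: t).getLast? = some b := by
        rwa [List.getLast?_cons_cons] at hb
      have ih := chain_rtg (d :: t) d b hch.2 rfl hb'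
      have ih' : Relation.ReflTransGen (fun p q => R p q ∧ q ∈ a :: d :: t) d b :=
        Relation.ReflTransGen.mono (r := fun p q => R p q ∧ q ∈ d :: t) (p := fun p q => R p q ∧ q ∈ a :: d :: t) (fun p q ⟨h1, h2⟩ => ⟨h1, List.mem_cons_of_mem _ h2⟩) _ _ ih
      exact Relation.ReflTransGen.head ⟨hch.1, by simp⟩ ih'

/-- Let `A` be an arborescence of `G` rooted in `r` having degree
exactly one in the flip graph of `G` rooted in `r`, its unique neighbour `B` being
obtained from `A` by flipping in the arc `uv`. Then `G - uv` is built on `A`: every arc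
`x → y` of `G` other than `uv` that is not an arc of `A` has its tail `x` a descendant
of its head `y` in `A`. -/
theorem built_on_of_degree_one {V : Type*} [Fintype V] [DecidableEq V]
    (G : V → V → Prop) (r : V) (A B : Arborescence G r) (u v : V)
    (hadj : (FlipGraph G r).Adj A B)
    (hflip : B.arcs \ A.arcs = {(u, v)})
    (hdeg : ∀ C : Arborescence G r, (FlipGraph G r).Adj A C → C = B) :
    ∀ x y, G x y → (x, y) ≠ (u, v) → (x, y) ∉ A.arcs →
      IsDescendant (fun p q => (p, q) ∈ A.arcs) r y x := by
  intro x y hG hxyuv hxyA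
  by_contra hnd
  simp only [IsDescendant, not_forall] at hnd
  obtain ⟨l, hch, hhd, hlast, hyl⟩ := hnd
  -- y ≠ r and x ≠ y since l starts at r, ends at x, avoids y
  have hyr : y ≠ r := by
    intro h; subst h
    exact hyl (List.mem_of_mem_head? (by rw [hhd]; exact rfl))
  -- unique arc of A entering y
  obtain ⟨ay, ⟨hayA, hay2⟩, hayu⟩ := A.uniqueIn y hyr
  have hayne : ay ≠ (x, y) := fun h => hxyA (h ▸ hayA)
  -- new arc set
  set s : Finset (V × V) := insert (x, y) (A.arcs.erase ay) with hs
  have hmem : ∀ a : V × V, a ∈ s ↔ a = (x, y) ∨ (a ∈ A.arcs ∧ a ≠ ay) := by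
    intro a
    simp only [hs, Finset.mem_insert, Finset.mem_erase]
    tauto
  -- reachability of x avoiding y, in s
  have hxreach : Relation.ReflTransGen (fun p q => (p, q) ∈ s) r x := by
    have := chain_rtg l r x hch hhd hlast
    refine Relation.ReflTransGen.mono (r := fun p q => (p, q) ∈ A.arcs ∧ q ∈ l) (p := fun p q => (p, q) ∈ s) (fun p q ⟨h1, h2⟩ => (?_ : (p, q) ∈ s)) _ _ this
    rw [hmem]
    right
    refine ⟨h1, fun he => hyl ?_⟩
    have hq : q = y := by rw [← hay2, ← he]
    exact hq ▸ h2
  have hreach : ∀ w, Relation.ReflTransGen (fun p q => (p, q) ∈ s) r w := by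
    intro w
    induction A.reach w with
    | refl => exact .refl
    | @tail b c hab hbc ih =>
      by_cases hc : (b, c) = ay
      · have : c = y := by rw [← hay2]; exact congrArg Prod.snd hc
        subst this
        exact hxreach.tail (by rw [hmem]; left; rfl)
      · exact ih.tail (by rw [hmem]; right; exact ⟨hbc, hc⟩)
  -- build the arborescence C
  have hsub : ∀ a ∈ s, G a.1 a.2 := by
    intro a ha
    rw [hmem] at ha
    rcases ha with h | ⟨h, _⟩
    · subst h; exact hG
    · exact A.sub a h
  have hnoRoot : ∀ a ∈ s, a.2 ≠ r := by
    intro a ha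
    rw [hmem] at ha
    rcases ha with h | ⟨h, _⟩
    · subst h; exact hyr
    · exact A.noRoot a h
  have huniq : ∀ w, w ≠ r → ∃! a, a ∈ s ∧ a.2 = w := by
    intro w hw
    by_cases hwy : w = y
    · refine ⟨(x, y), ⟨by rw [hmem]; left; rfl, hwy.symm⟩, ?_⟩
      intro a ⟨ha, ha2⟩
      rw [hmem] at ha
      rcases ha with h | ⟨h, hne⟩
      · exact h
      · exact absurd (hayu a ⟨h, ha2.trans hwy⟩) hne
    · obtain ⟨aw, ⟨hawA, haw2⟩, hawu⟩ := A.uniqueIn w hw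
      have hawne : aw ≠ ay := fun h => hwy (by rw [← haw2, h, hay2])
      refine ⟨aw, ⟨by rw [hmem]; right; exact ⟨hawA, hawne⟩, haw2⟩, ?_⟩
      intro a ⟨ha, ha2⟩
      rw [hmem] at ha
      rcases ha with h | ⟨h, _⟩
      · subst h; exact absurd ha2.symm hwy
      · exact hawu a ⟨h, ha2⟩
  let C : Arborescence G r := ⟨s, hsub, hnoRoot, huniq, hreach⟩
  -- compute the differences
  have hCA : C.arcs \ A.arcs = {(x, y)} := by
    ext a
    simp only [Finset.mem_sdiff, Finset.mem_singleton]
    constructor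
    · rintro ⟨ha, hna⟩
      rw [hmem] at ha
      rcases ha with h | ⟨h, _⟩
      · exact h
      · exact absurd h hna
    · rintro rfl
      exact ⟨by rw [hmem]; left; rfl, hxyA⟩
  have hAC : A.arcs \ C.arcs = {ay} := by
    ext a
    simp only [Finset.mem_sdiff, Finset.mem_singleton]
    constructor
    · rintro ⟨ha, hna⟩
      rw [hmem] at hna
      push_neg at hna
      exact hna.2 ha
    · rintro heq
      refine ⟨heq ▸ hayA, fun hmem' => ?_⟩
      rw [hmem] at hmem'
      rcases hmem' with h | ⟨_, hne⟩
      · exact hayne (heq ▸ h)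
      · exact hne heq
  have hne : A ≠ C := by
    intro h
    apply hxyA
    rw [h]
    show (x, y) ∈ s
    rw [hmem]
    left; rfl
  have hadjC : (FlipGraph G r).Adj A C :=
    (⟨hne, by rw [hAC]; simp, by rw [hCA]; simp⟩ :
      A ≠ C ∧ (A.arcs \ C.arcs).card = 1 ∧ (C.arcs \ A.arcs).card = 1)
  have hCB := hdeg C hadjC
  rw [hCB] at hCA
  rw [hflip] at hCA
  exact hxyuv (Finset.singleton_injective hCA.symm)
end

section
/- There exists a tournament G on 4 vertices with a root vertex r such that G has exactly 7 arborescences rooted in r and the flip graph of G rooted in r admits a Hamiltonian path but no Hamiltonian cycle. (An explicit example: vertices r, u, v, x with arcs r→u, r→v, r→x, u→v, v→x, x→u; its flip graph is bipartite with parts of sizes 3 and 4.) -/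
-- auxiliary
def Grr : Fin 4 → Fin 4 → Prop := fun i j =>
  (i, j) ∈ ({(0,1),(0,2),(0,3),(1,2),(2,3),(3,1)} : Finset (Fin 4 × Fin 4))

instance : ∀ i j, Decidable (Grr i j) := fun _ _ =>
  inferInstanceAs (Decidable (_ ∈ _))

abbrev RT (s : Finset (Fin 4 × Fin 4)) (a b : Fin 4) : Prop :=
  Relation.ReflTransGen (fun x y => (x, y) ∈ s) a b

lemma chain1 {s : Finset (Fin 4 × Fin 4)} {a b : Fin 4} (h : (a,b) ∈ s) : RT s a b :=
  .single h

lemma chain2 {s : Finset (Fin 4 × Fin 4)} {a c : Fin 4} (b : Fin 4)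
    (h1 : (a,b) ∈ s) (h2 : (b,c) ∈ s) : RT s a c := .tail (.single h1) h2

lemma chain3 {s : Finset (Fin 4 × Fin 4)} {a d : Fin 4} (b c : Fin 4)
    (h1 : (a,b) ∈ s) (h2 : (b,c) ∈ s) (h3 : (c,d) ∈ s) : RT s a d :=
  .tail (.tail (.single h1) h2) h3

def mkA (s : Finset (Fin 4 × Fin 4))
    (h1 : ∀ a ∈ s, Grr a.1 a.2) (h2 : ∀ a ∈ s, a.2 ≠ 0)
    (h3 : ∀ v, v ≠ 0 → ∃! a, a ∈ s ∧ a.2 = v)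
    (h4 : ∀ v, RT s 0 v) :
    Arborescence Grr 0 := ⟨s, h1, h2, h3, h4⟩

def B0 : Arborescence Grr 0 :=
  mkA {(0,1),(0,2),(0,3)} (by decide) (by decide)
    (by intro v hv; fin_cases v
        · exact absurd rfl hv
        · exact ⟨(0,1), by decide, by decide⟩
        · exact ⟨(0,2), by decide, by decide⟩
        · exact ⟨(0,3), by decide, by decide⟩)
    (by intro v; fin_cases v
        · exact .refl
        · exact chain1 (by decide)
        · exact chain1 (by decide)
        · exact chain1 (by decide))

def B1 : Arborescence Grr 0 :=
  mkA {(0,1),(0,2),(2,3)} (by decide) (by decide)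
    (by intro v hv; fin_cases v
        · exact absurd rfl hv
        · exact ⟨(0,1), by decide, by decide⟩
        · exact ⟨(0,2), by decide, by decide⟩
        · exact ⟨(2,3), by decide, by decide⟩)
    (by intro v; fin_cases v
        · exact .refl
        · exact chain1 (by decide)
        · exact chain1 (by decide)
        · exact chain2 2 (by decide) (by decide))

def B2 : Arborescence Grr 0 :=
  mkA {(0,1),(1,2),(0,3)} (by decide) (by decide)
    (by intro v hv; fin_cases v
        · exact absurd rfl hv
        · exact ⟨(0,1), by decide, by decide⟩
        · exact ⟨(1,2), by decide, by decide⟩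
        · exact ⟨(0,3), by decide, by decide⟩)
    (by intro v; fin_cases v
        · exact .refl
        · exact chain1 (by decide)
        · exact chain2 1 (by decide) (by decide)
        · exact chain1 (by decide))

def B3 : Arborescence Grr 0 :=
  mkA {(0,1),(1,2),(2,3)} (by decide) (by decide)
    (by intro v hv; fin_cases v
        · exact absurd rfl hv
        · exact ⟨(0,1), by decide, by decide⟩
        · exact ⟨(1,2), by decide, by decide⟩
        · exact ⟨(2,3), by decide, by decide⟩)
    (by intro v; fin_cases v
        · exact .refl
        · exact chain1 (by decide)
        · exact chain2 1 (by decide) (by decide)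
        · exact chain3 1 2 (by decide) (by decide) (by decide))

def B4 : Arborescence Grr 0 :=
  mkA {(3,1),(0,2),(0,3)} (by decide) (by decide)
    (by intro v hv; fin_cases v
        · exact absurd rfl hv
        · exact ⟨(3,1), by decide, by decide⟩
        · exact ⟨(0,2), by decide, by decide⟩
        · exact ⟨(0,3), by decide, by decide⟩)
    (by intro v; fin_cases v
        · exact .refl
        · exact chain2 3 (by decide) (by decide)
        · exact chain1 (by decide)
        · exact chain1 (by decide))

def B5 : Arborescence Grr 0 :=
  mkA {(3,1),(0,2),(2,3)} (by decide) (by decide)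
    (by intro v hv; fin_cases v
        · exact absurd rfl hv
        · exact ⟨(3,1), by decide, by decide⟩
        · exact ⟨(0,2), by decide, by decide⟩
        · exact ⟨(2,3), by decide, by decide⟩)
    (by intro v; fin_cases v
        · exact .refl
        · exact chain3 2 3 (by decide) (by decide) (by decide)
        · exact chain1 (by decide)
        · exact chain2 2 (by decide) (by decide))

def B6 : Arborescence Grr 0 :=
  mkA {(3,1),(1,2),(0,3)} (by decide) (by decide)
    (by intro v hv; fin_cases v
        · exact absurd rfl hv
        · exact ⟨(3,1), by decide, by decide⟩
        · exact ⟨(1,2), by decide, by decide⟩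
        · exact ⟨(0,3), by decide, by decide⟩)
    (by intro v; fin_cases v
        · exact .refl
        · exact chain2 3 (by decide) (by decide)
        · exact chain3 3 1 (by decide) (by decide) (by decide)
        · exact chain1 (by decide))

lemma allArbs (A : Arborescence Grr 0) :
    A ∈ ({B0, B1, B2, B3, B4, B5, B6} : Finset (Arborescence Grr 0)) := by
  obtain ⟨a1, ⟨ha1, he1⟩, hu1⟩ := A.uniqueIn 1 (by decide)
  obtain ⟨a2, ⟨ha2, he2⟩, hu2⟩ := A.uniqueIn 2 (by decide)
  obtain ⟨a3, ⟨ha3, he3⟩, hu3⟩ := A.uniqueIn 3 (by decide)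
  have harcs : A.arcs = {a1, a2, a3} := by
    ext x
    simp only [Finset.mem_insert, Finset.mem_singleton]
    constructor
    · intro hx
      have hx0 := A.noRoot x hx
      obtain ⟨y, z⟩ := x
      fin_cases z
      · exact absurd rfl hx0
      · exact Or.inl (hu1 _ ⟨hx, rfl⟩)
      · exact Or.inr (Or.inl (hu2 _ ⟨hx, rfl⟩))
      · exact Or.inr (Or.inr (hu3 _ ⟨hx, rfl⟩))
    · rintro (rfl | rfl | rfl) <;> assumption
  have h1 : a1 = (0,1) ∨ a1 = (3,1) := by
    have hs := A.sub a1 ha1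
    obtain ⟨y, z⟩ := a1
    simp only at he1; subst he1
    fin_cases y <;> revert hs <;> decide
  have h2 : a2 = (0,2) ∨ a2 = (1,2) := by
    have hs := A.sub a2 ha2
    obtain ⟨y, z⟩ := a2
    simp only at he2; subst he2
    fin_cases y <;> revert hs <;> decide
  have h3 : a3 = (0,3) ∨ a3 = (2,3) := by
    have hs := A.sub a3 ha3
    obtain ⟨y, z⟩ := a3
    simp only at he3; subst he3
    fin_cases y <;> revert hs <;> decide
  simp only [Finset.mem_insert, Finset.mem_singleton]
  rcases h1 with rfl | rfl <;> rcases h2 with rfl | rfl <;> rcases h3 with rfl | rfl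
  · exact Or.inl (Arborescence.ext' harcs)
  · exact Or.inr (Or.inl (Arborescence.ext' harcs))
  · exact Or.inr (Or.inr (Or.inl (Arborescence.ext' harcs)))
  · exact Or.inr (Or.inr (Or.inr (Or.inl (Arborescence.ext' harcs))))
  · exact Or.inr (Or.inr (Or.inr (Or.inr (Or.inl (Arborescence.ext' harcs)))))
  · exact Or.inr (Or.inr (Or.inr (Or.inr (Or.inr (Or.inl (Arborescence.ext' harcs))))))
  · exact Or.inr (Or.inr (Or.inr (Or.inr (Or.inr (Or.inr (Arborescence.ext' harcs))))))
  · -- the cyclic case (3,1),(1,2),(2,3): contradicts reachability of 1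
    exfalso
    have hr := A.reach 1
    rcases hr.cases_head with h | ⟨c, hc, -⟩
    · exact absurd h (by decide)
    · rw [harcs] at hc
      fin_cases c <;> exact absurd hc (by decide)

instance : Fintype (Arborescence Grr 0) where
  elems := {B0, B1, B2, B3, B4, B5, B6}
  complete := allArbs

instance : DecidableRel (FlipGraph Grr 0).Adj := fun A B =>
  inferInstanceAs (Decidable (A ≠ B ∧ (A.arcs \ B.arcs).card = 1 ∧ (B.arcs \ A.arcs).card = 1))

/-- parity coloring: even arborescences get 0 -/
def par (A : Arborescence Grr 0) : ZMod 2 :=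
  if A = B0 ∨ A = B3 ∨ A = B5 ∨ A = B6 then 0 else 1

lemma par_adj : ∀ A B, (FlipGraph Grr 0).Adj A B → par A ≠ par B := by decide

lemma par_walk {A B : Arborescence Grr 0} (p : (FlipGraph Grr 0).Walk A B) :
    par A + p.length = par B := by
  induction p with
  | nil => simp
  | @cons u v w h q ih =>
    have hne := par_adj _ _ h
    have hv : par v = par u + 1 := by
      revert hne; generalize par u = x; generalize par v = y
      revert x y; decide
    rw [SimpleGraph.Walk.length_cons]
    push_cast
    rw [hv] at ih
    rw [← ih]; ring

def hamwalk : (FlipGraph Grr 0).Walk B0 B5 :=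
  .cons (v := B1) (by decide) (.cons (v := B3) (by decide) (.cons (v := B2) (by decide)
    (.cons (v := B6) (by decide) (.cons (v := B4) (by decide)
      (.cons (v := B5) (by decide) .nil)))))

lemma hamwalk_ham : hamwalk.IsHamiltonian :=
  (by decide : ∀ a, hamwalk.support.count a = 1)


/-- There exists a tournament `G` on 4 vertices with a root `r` having
exactly 7 arborescences rooted in `r`, whose flip graph admits a Hamiltonian path but no
Hamiltonian cycle. -/
theorem exists_tournament_seven_arborescences_path_no_cycle :
    ∃ (G : Fin 4 → Fin 4 → Prop) (r : Fin 4),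
      (∀ i : Fin 4, ¬ G i i) ∧
      (∀ i j : Fin 4, i ≠ j → Xor' (G i j) (G j i)) ∧
      Nat.card (Arborescence G r) = 7 ∧
      (∃ (A B : Arborescence G r) (p : (FlipGraph G r).Walk A B), p.IsHamiltonian) ∧
      ¬ ∃ (A : Arborescence G r) (p : (FlipGraph G r).Walk A A), p.IsHamiltonianCycle := by
  refine ⟨Grr, 0, by decide, by unfold Xor'; decide, ?_, ⟨B0, B5, hamwalk, hamwalk_ham⟩, ?_⟩
  · rw [Nat.card_eq_fintype_card]
    decide
  · rintro ⟨A, p, hp⟩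
    have hl := hp.length_eq
    have hcard : Fintype.card (Arborescence Grr 0) = 7 := by decide
    have hpar := par_walk p
    rw [hl, hcard] at hpar
    have h7 : ((7 : ℕ) : ZMod 2) = 0 :=
      add_left_cancel (a := par A) (by rw [add_zero]; exact hpar)
    exact absurd h7 (by decide)
end
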